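/- Under the blanket assumptions, assume the level set X := {x: F(x) ≤ F(x⁰)} is nonempty and compact, fix α̲ > 0, and define ḡ := sup_{z∈X} g(z), X_{α̲} := {z: dist²(z,X) ≤ ḡ/α̲}, 𝒴 := ∪_{z ∈ X_{α̲}} ∂g(z), and S := {(x,y) ∈ X × 𝒴: η(x,y) > 0}. Then the function η(x,y) = ⟨x,y⟩ − g*(y) is Lipschitz continuous on X × 𝒴 (in particular, g* is Lipschitz continuous on 𝒴 with constant sup{‖x‖₂ + √(ḡ/α̲): x ∈ X}), and consequently Q is continuous on S (with respect to the relative topology of S). -/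

import Mathlib

open Filter Topology Set
open scoped RealInnerProductSpace Pointwise NNReal

noncomputable section

namespace Paper

variable {E : Type*} [NormedAddCommGroup E] [InnerProductSpace ℝ E]

/-- The effective domain of an extended-real-valued function. -/
def edom (φ : E → EReal) : Set E := {x | φ x ≠ ⊤}

/-- A function with values in `(-∞, +∞]` is proper if it is not identically `+∞`
and never takes the value `-∞`. -/
def Proper (φ : E → EReal) : Prop := (∃ x, φ x ≠ ⊤) ∧ ∀ x, φ x ≠ ⊥

/-- The Fréchet subdifferential of `φ` at `x`. -/
def frSubdiff (φ : E → EReal) (x : E) : Set E :=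
  {y | φ x ≠ ⊤ ∧ 0 ≤ Filter.liminf
      (fun z : E => (φ z - φ x - ((⟪y, z - x⟫ : ℝ) : EReal)) * ((‖z - x‖⁻¹ : ℝ) : EReal))
      (𝓝[≠] x)}

/-- The limiting (Mordukhovich) subdifferential of `φ` at `x`. -/
def limSubdiff (φ : E → EReal) (x : E) : Set E :=
  {y | ∃ u v : ℕ → E,
      Tendsto u atTop (𝓝 x) ∧ Tendsto (fun k => φ (u k)) atTop (𝓝 (φ x)) ∧
      (∀ k, v k ∈ frSubdiff φ (u k)) ∧ Tendsto v atTop (𝓝 y)}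

/-- The convex subdifferential of a real-valued function. -/
def cvxSubdiff (g : E → ℝ) (x : E) : Set E :=
  {y | ∀ z, g x + ⟪y, z - x⟫ ≤ g z}

/-- The convex subdifferential of an extended-real-valued function. -/
def cvxSubdiffE (φ : E → EReal) (x : E) : Set E :=
  {y | ∀ z, φ x + ((⟪y, z - x⟫ : ℝ) : EReal) ≤ φ z}

/-- The Fenchel conjugate of an extended-real-valued function. -/
def fconjE (φ : E → EReal) : E → EReal :=
  fun y => ⨆ x : E, (((⟪x, y⟫ : ℝ) : EReal) - φ x)

/-- The Fenchel conjugate of a real-valued function. -/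
def fconj (g : E → ℝ) : E → EReal := fconjE (fun x => ((g x : ℝ) : EReal))

/-- `φ` satisfies the calmness condition at `x` relative to `A`. -/
def CalmAt (φ : E → EReal) (x : E) (A : Set E) : Prop :=
  ∃ κ : ℝ, 0 < κ ∧ ∃ B ∈ 𝓝 x, ∀ u ∈ B ∩ A,
    φ u ≤ φ x + ((κ * ‖u - x‖ : ℝ) : EReal) ∧ φ x ≤ φ u + ((κ * ‖u - x‖ : ℝ) : EReal)

/-- `φ` satisfies the calmness condition on `A`. -/
def CalmOn (φ : E → EReal) (A : Set E) : Prop := ∀ x ∈ A, CalmAt φ x A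

/-- The Kurdyka–Łojasiewicz property of `φ` at `x`. -/
def KLAt (φ : E → EReal) (x : E) : Prop :=
  ∃ ε > (0 : ℝ), ∃ δ > (0 : ℝ), ∃ ϕ ϕ' : ℝ → ℝ,
    ϕ 0 = 0 ∧ ContinuousOn ϕ (Set.Ico 0 ε) ∧ ConcaveOn ℝ (Set.Ico 0 ε) ϕ ∧
    (∀ s ∈ Set.Ioo (0 : ℝ) ε, HasDerivAt ϕ (ϕ' s) s) ∧
    ContinuousOn ϕ' (Set.Ioo 0 ε) ∧ (∀ s ∈ Set.Ioo (0 : ℝ) ε, 0 < ϕ' s) ∧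
    ∀ z ∈ Metric.ball x δ, φ x < φ z → φ z < φ x + (ε : EReal) →
      1 ≤ ENNReal.ofReal (ϕ' ((φ z).toReal - (φ x).toReal)) *
        EMetric.infEdist (0 : E) (limSubdiff φ z)

/-- The KL property of `φ` at `x` with exponent `θ`. -/
def KLExpAt (φ : E → EReal) (x : E) (θ : ℝ) : Prop :=
  ∃ c > (0 : ℝ), ∃ ε > (0 : ℝ), ∃ δ > (0 : ℝ),
    ∀ z ∈ Metric.ball x δ, φ x < φ z → φ z < φ x + (ε : EReal) →
      ENNReal.ofReal (c * ((φ z).toReal - (φ x).toReal) ^ θ) ≤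
        EMetric.infEdist (0 : E) (limSubdiff φ z)

/-- The (possibly multivalued) proximity operator of `φ`. -/
def proxSet (φ : E → EReal) (u : E) : Set E :=
  {z | ∀ w, φ z + ((‖z - u‖ ^ 2 / 2 : ℝ) : EReal) ≤ φ w + ((‖w - u‖ ^ 2 / 2 : ℝ) : EReal)}

/-- A positive scaling of an extended-real-valued function. -/
def scaleE (α : ℝ) (φ : E → EReal) : E → EReal := fun x => ((α : ℝ) : EReal) * φ x

/-- `h` is locally Lipschitz differentiable on `s`. -/
def LocLipGradOn [CompleteSpace E] (h : E → ℝ) (s : Set E) : Prop :=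
  (∀ x ∈ s, DifferentiableAt ℝ h x) ∧
  ∀ x ∈ s, ∃ U ∈ 𝓝 x, ∃ L : ℝ, ∀ u ∈ U ∩ s, ∀ v ∈ U ∩ s,
    ‖gradient h u - gradient h v‖ ≤ L * ‖u - v‖

/-- The numerator `ζ = f + h`. -/
def zeta (f : E → EReal) (h : E → ℝ) (x : E) : EReal := f x + ((h x : ℝ) : EReal)

/-- `η(x,y) = ⟨x,y⟩ − g^*(y)`. -/
def eta (g : E → ℝ) (x y : E) : EReal := ((⟪x, y⟫ : ℝ) : EReal) - fconj g y

/-- The extended objective of the fractional problem. -/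
def Ffun (f : E → EReal) (g h : E → ℝ) (x : E) : EReal :=
  if g x ≠ 0 ∧ f x ≠ ⊤ then ((((f x).toReal + h x) / g x : ℝ) : EReal) else ⊤

/-- The extended objective of the reformulated problem. -/
def Qfun (f : E → EReal) (g h : E → ℝ) (x y : E) : EReal :=
  if f x ≠ ⊤ ∧ 0 < eta g x y then
    ((((f x).toReal + h x) / (eta g x y).toReal : ℝ) : EReal) else ⊤

/-- Pack a pair into the `ℓ²` product space. -/
def mk2 (x y : E) : WithLp 2 (E × E) := (WithLp.equiv 2 (E × E)).symm (x, y)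

def pr1 (p : WithLp 2 (E × E)) : E := (WithLp.equiv 2 (E × E) p).1

def pr2 (p : WithLp 2 (E × E)) : E := (WithLp.equiv 2 (E × E) p).2

/-- `Q` as a function on the `ℓ²` product space. -/
def Qpair (f : E → EReal) (g h : E → ℝ) (p : WithLp 2 (E × E)) : EReal :=
  Qfun f g h (pr1 p) (pr2 p)

/-- The blanket assumptions of the paper. -/
structure Blanket [CompleteSpace E] (f : E → EReal) (g h : E → ℝ) : Prop where
  f_proper : Proper f
  f_lsc : LowerSemicontinuous f
  f_cont : ContinuousOn f (edom f)
  f_bddBelow : ∃ m : ℝ, ∀ x, (m : EReal) ≤ f x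
  h_lsc : LowerSemicontinuous h
  h_diff : LocLipGradOn h {x | g x ≠ 0}
  g_convex : ConvexOn ℝ Set.univ g
  g_nonneg : ∀ x, 0 ≤ g x
  omega_nonempty : ∃ x, g x ≠ 0
  zeta_nonneg : ∀ x, f x ≠ ⊤ → 0 ≤ zeta f h x

/-- `x` is a critical point of `F`: `0 ∈ ∂̂f(x) + ∇h(x) − F(x)·∂g(x)`. -/
def IsCritF [CompleteSpace E] (f : E → EReal) (g h : E → ℝ) (x : E) : Prop :=
  g x ≠ 0 ∧ f x ≠ ⊤ ∧
  ∃ u ∈ frSubdiff f x, ∃ v ∈ cvxSubdiff g x,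
    u + gradient h x - (Ffun f g h x).toReal • v = 0

/-- The level set `X = {x : F(x) ≤ F(x⁰)}`. -/
def lvlSet (f : E → EReal) (g h : E → ℝ) (x0 : E) : Set E :=
  {x | Ffun f g h x ≤ Ffun f g h x0}

/-- The enlargement `X_{α̲}` of the level set. -/
def Xal (f : E → EReal) (g h : E → ℝ) (x0 : E) (αl : ℝ) : Set E :=
  {z | (Metric.infDist z (lvlSet f g h x0)) ^ 2 ≤ sSup (g '' lvlSet f g h x0) / αl}

/-- The compact set `𝒴 = ∪_{z ∈ X_{α̲}} ∂g(z)`. -/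
def Yset (f : E → EReal) (g h : E → ℝ) (x0 : E) (αl : ℝ) : Set E :=
  ⋃ z ∈ Xal f g h x0 αl, cvxSubdiff g z

/-- The set `S = {(x,y) ∈ X × 𝒴 : η(x,y) > 0}`. -/
def Sset (f : E → EReal) (g h : E → ℝ) (x0 : E) (αl : ℝ) : Set (E × E) :=
  {p | p.1 ∈ lvlSet f g h x0 ∧ p.2 ∈ Yset f g h x0 αl ∧ 0 < eta g p.1 p.2}

/-- The set of accumulation points of a sequence. -/
def accSet {X : Type*} [TopologicalSpace X] (pt : ℕ → X) : Set X :=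
  {p | ∃ σ : ℕ → ℕ, StrictMono σ ∧ Tendsto (pt ∘ σ) atTop (𝓝 p)}

/-- A polyhedral function: its epigraph is a finite intersection of closed half-spaces. -/
def IsPolyhedralFn (φ : E → EReal) : Prop :=
  ∃ (m : ℕ) (w : Fin m → E) (c b : Fin m → ℝ),
    ∀ (x : E) (a : ℝ), (φ x ≤ (a : EReal) ↔ ∀ i, ⟪w i, x⟫ + c i * a ≤ b i)


/-! For `y ∈ ∂g(z)` the Fenchel–Young inequality is an equality, `g*(y) = ⟪z, y⟫ - g(z)`, so `g*`
is finite on `𝒴`, and `g*(y₁) - g*(y₂)` lies between `⟪z₂, y₁ - y₂⟫` and `⟪z₁, y₁ - y₂⟫`.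
Every `z ∈ X_α̲` is within `√(ḡ/α̲)` of the compact set `X`, which bounds `‖z‖` and hence gives
the Lipschitz constant of `g*`. Subgradients of the continuous convex `g` over a bounded set are
bounded, so `𝒴` is bounded and the bilinear part `⟪x, y⟫` of `η` is Lipschitz on `X × 𝒴` too.
Finally `Q = ζ/η` on `S`, a quotient of continuous functions with positive denominator. -/

section Conjugate

variable {g : E → ℝ}

lemma inner_sub_le_of_mem_cvxSubdiff {z y : E} (hy : y ∈ cvxSubdiff g z) (x : E) :
    ⟪x, y⟫ - g x ≤ ⟪z, y⟫ - g z := by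
  have := hy x
  rw [inner_sub_right, real_inner_comm x, real_inner_comm z] at this
  linarith

lemma fconj_eq_of_mem_cvxSubdiff {z y : E} (hy : y ∈ cvxSubdiff g z) :
    fconj g y = ((⟪z, y⟫ - g z : ℝ) : EReal) := by
  refine le_antisymm (iSup_le fun x => ?_) ?_
  · have := inner_sub_le_of_mem_cvxSubdiff hy x
    dsimp only
    exact_mod_cast this
  · exact_mod_cast le_iSup (fun x => ((⟪x, y⟫ : ℝ) : EReal) - ((g x : ℝ) : EReal)) z

lemma fconj_toReal_of_mem_cvxSubdiff {z y : E} (hy : y ∈ cvxSubdiff g z) :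
    (fconj g y).toReal = ⟪z, y⟫ - g z := by
  rw [fconj_eq_of_mem_cvxSubdiff hy, EReal.toReal_coe]

lemma fconj_ne_bot (y : E) : fconj g y ≠ ⊥ :=
  ne_bot_of_le_ne_bot (EReal.coe_ne_bot (⟪0, y⟫ - g 0))
    (by exact_mod_cast le_iSup (fun x => ((⟪x, y⟫ : ℝ) : EReal) - ((g x : ℝ) : EReal)) 0)

lemma eta_eq_coe {y : E} (hy : fconj g y ≠ ⊤) (x : E) :
    eta g x y = ((⟪x, y⟫ - (fconj g y).toReal : ℝ) : EReal) := by
  rw [eta, EReal.coe_sub, EReal.coe_toReal hy (fconj_ne_bot y)]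

lemma fconj_toReal_sub_le_inner {z₁ z₂ y₁ y₂ : E} (h₁ : y₁ ∈ cvxSubdiff g z₁)
    (h₂ : y₂ ∈ cvxSubdiff g z₂) :
    (fconj g y₁).toReal - (fconj g y₂).toReal ≤ ⟪z₁, y₁ - y₂⟫ := by
  rw [fconj_toReal_of_mem_cvxSubdiff h₁, fconj_toReal_of_mem_cvxSubdiff h₂, inner_sub_right]
  linarith [inner_sub_le_of_mem_cvxSubdiff h₂ z₁]

lemma abs_fconj_toReal_sub_le {z₁ z₂ y₁ y₂ : E} {L : ℝ} (h₁ : y₁ ∈ cvxSubdiff g z₁)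
    (h₂ : y₂ ∈ cvxSubdiff g z₂) (hz₁ : ‖z₁‖ ≤ L) (hz₂ : ‖z₂‖ ≤ L) :
    |(fconj g y₁).toReal - (fconj g y₂).toReal| ≤ L * ‖y₁ - y₂‖ := by
  have bound : ∀ z, ‖z‖ ≤ L → ∀ u : E, ⟪z, u⟫ ≤ L * ‖u‖ := fun z hz u =>
    (real_inner_le_norm z u).trans (mul_le_mul_of_nonneg_right hz (norm_nonneg u))
  rw [abs_sub_le_iff]
  constructor
  · exact (fconj_toReal_sub_le_inner h₁ h₂).trans (bound z₁ hz₁ _)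
  · simpa only [norm_sub_rev] using (fconj_toReal_sub_le_inner h₂ h₁).trans (bound z₂ hz₂ _)

lemma abs_eta_toReal_sub_le {z₁ z₂ x₁ x₂ y₁ y₂ : E} {L M N : ℝ} (h₁ : y₁ ∈ cvxSubdiff g z₁)
    (h₂ : y₂ ∈ cvxSubdiff g z₂) (hz₁ : ‖z₁‖ ≤ L) (hz₂ : ‖z₂‖ ≤ L) (hx₁ : ‖x₁‖ ≤ M)
    (hy₂ : ‖y₂‖ ≤ N) :
    |(eta g x₁ y₁).toReal - (eta g x₂ y₂).toReal| ≤ (M + N + L) * ‖mk2 x₁ y₁ - mk2 x₂ y₂‖ := by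
  have hM : 0 ≤ M := (norm_nonneg _).trans hx₁
  have hN : 0 ≤ N := (norm_nonneg _).trans hy₂
  have hL : 0 ≤ L := (norm_nonneg _).trans hz₁
  have hx : ‖x₁ - x₂‖ ≤ ‖mk2 x₁ y₁ - mk2 x₂ y₂‖ := by
    rw [← dist_eq_norm, ← dist_eq_norm]
    exact WithLp.dist_fst_le (mk2 x₁ y₁) (mk2 x₂ y₂)
  have hy : ‖y₁ - y₂‖ ≤ ‖mk2 x₁ y₁ - mk2 x₂ y₂‖ := by
    rw [← dist_eq_norm, ← dist_eq_norm]
    exact WithLp.dist_snd_le (mk2 x₁ y₁) (mk2 x₂ y₂)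
  rw [eta_eq_coe (fconj_eq_of_mem_cvxSubdiff h₁ ▸ EReal.coe_ne_top _),
    eta_eq_coe (fconj_eq_of_mem_cvxSubdiff h₂ ▸ EReal.coe_ne_top _),
    EReal.toReal_coe, EReal.toReal_coe]
  calc |⟪x₁, y₁⟫ - (fconj g y₁).toReal - (⟪x₂, y₂⟫ - (fconj g y₂).toReal)|
      = |⟪x₁, y₁ - y₂⟫ + ⟪x₁ - x₂, y₂⟫ - ((fconj g y₁).toReal - (fconj g y₂).toReal)| := by
        rw [inner_sub_right, inner_sub_left]; ring_nf
    _ ≤ |⟪x₁, y₁ - y₂⟫| + |⟪x₁ - x₂, y₂⟫| + |(fconj g y₁).toReal - (fconj g y₂).toReal| :=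
        (abs_sub _ _).trans (add_le_add_left (abs_add_le _ _) _)
    _ ≤ ‖x₁‖ * ‖y₁ - y₂‖ + ‖x₁ - x₂‖ * ‖y₂‖ + L * ‖y₁ - y₂‖ := by
        gcongr
        · exact abs_real_inner_le_norm _ _
        · exact abs_real_inner_le_norm _ _
        · exact abs_fconj_toReal_sub_le h₁ h₂ hz₁ hz₂
    _ ≤ M * ‖mk2 x₁ y₁ - mk2 x₂ y₂‖ + ‖mk2 x₁ y₁ - mk2 x₂ y₂‖ * N +
          L * ‖mk2 x₁ y₁ - mk2 x₂ y₂‖ := by gcongr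
    _ = (M + N + L) * ‖mk2 x₁ y₁ - mk2 x₂ y₂‖ := by ring

lemma norm_le_of_mem_cvxSubdiff {z y : E} {M : ℝ} (hy : y ∈ cvxSubdiff g z)
    (hM : ∀ w ∈ Metric.closedBall z 1, g w ≤ M) : ‖y‖ ≤ M - g z := by
  rcases eq_or_ne y 0 with rfl | hy0
  · simpa using hM z (Metric.mem_closedBall_self zero_le_one)
  · have hunit : z + ‖y‖⁻¹ • y ∈ Metric.closedBall z 1 := by
      rw [Metric.mem_closedBall, dist_self_add_left, norm_smul, norm_inv, norm_norm,
        inv_mul_cancel₀ (norm_ne_zero_iff.mpr hy0)]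
    have hinner : ⟪y, ‖y‖⁻¹ • y⟫ = ‖y‖ := by
      rw [real_inner_smul_right, real_inner_self_eq_norm_sq]
      field_simp [norm_ne_zero_iff.mpr hy0]
    have := hy (z + ‖y‖⁻¹ • y)
    rw [add_sub_cancel_left, hinner] at this
    linarith [hM _ hunit]

lemma isBounded_biUnion_cvxSubdiff [ProperSpace E] (hg : Continuous g) {s : Set E}
    (hs : Bornology.IsBounded s) : Bornology.IsBounded (⋃ z ∈ s, cvxSubdiff g z) := by
  obtain ⟨R, hR⟩ := hs.subset_closedBall 0
  obtain ⟨A, hA⟩ := (isCompact_closedBall (0 : E) (R + 1)).bddAbove_image hg.continuousOn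
  obtain ⟨B, hB⟩ := (isCompact_closedBall (0 : E) R).bddBelow_image hg.continuousOn
  refine (Metric.isBounded_closedBall (x := (0 : E)) (r := A - B)).subset ?_
  simp only [iUnion_subset_iff]
  intro z hz y hy
  have hball : Metric.closedBall z 1 ⊆ Metric.closedBall 0 (R + 1) :=
    Metric.closedBall_subset_closedBall' (by linarith [Metric.mem_closedBall.mp (hR hz)])
  have := norm_le_of_mem_cvxSubdiff hy fun w hw => hA ⟨w, hball hw, rfl⟩
  rw [mem_closedBall_zero_iff]
  linarith [hB ⟨z, hR hz, rfl⟩]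

end Conjugate

section LevelSet

variable {f : E → EReal} {g h : E → ℝ} {x0 : E}

omit [NormedAddCommGroup E] [InnerProductSpace ℝ E] in
lemma ne_zero_and_ne_top_of_mem_lvlSet (hx0 : Ffun f g h x0 ≠ ⊤) {x : E}
    (hx : x ∈ lvlSet f g h x0) : g x ≠ 0 ∧ f x ≠ ⊤ := by
  by_contra hdom
  have hle : Ffun f g h x ≤ Ffun f g h x0 := hx
  rw [Ffun, if_neg hdom, top_le_iff] at hle
  exact hx0 hle

omit [InnerProductSpace ℝ E] in
lemma Xal_subset_closedBall (hne : (lvlSet f g h x0).Nonempty)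
    (hcomp : IsCompact (lvlSet f g h x0)) (αl : ℝ) :
    Xal f g h x0 αl ⊆ Metric.closedBall 0
      (sSup ((fun x : E => ‖x‖) '' lvlSet f g h x0) +
        Real.sqrt (sSup (g '' lvlSet f g h x0) / αl)) := by
  intro z hz
  obtain ⟨x, hx, hdist⟩ := hcomp.exists_infDist_eq_dist hne z
  have hxnorm : ‖x‖ ≤ sSup ((fun x : E => ‖x‖) '' lvlSet f g h x0) :=
    le_csSup (hcomp.image continuous_norm).bddAbove ⟨x, hx, rfl⟩
  have hzx : ‖z - x‖ ≤ Real.sqrt (sSup (g '' lvlSet f g h x0) / αl) :=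
    Real.le_sqrt_of_sq_le (by rw [← dist_eq_norm, ← hdist]; exact hz)
  rw [mem_closedBall_zero_iff]
  calc ‖z‖ ≤ ‖x‖ + ‖z - x‖ := norm_le_norm_add_norm_sub' z x
    _ ≤ _ := add_le_add hxnorm hzx

end LevelSet

lemma continuousOn_Qfun {f : E → EReal} {g h : E → ℝ} {A Y : Set E}
    (hf : ContinuousOn f (edom f)) (hf_bot : ∀ x, f x ≠ ⊥) (hA : A ⊆ edom f)
    (hh : ∀ x ∈ A, ContinuousAt h x) (hY : ∀ y ∈ Y, fconj g y ≠ ⊤)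
    (hconj : ContinuousOn (fun y => (fconj g y).toReal) Y) :
    ContinuousOn (fun p : E × E => Qfun f g h p.1 p.2)
      {p | p.1 ∈ A ∧ p.2 ∈ Y ∧ 0 < eta g p.1 p.2} := by
  set S := {p : E × E | p.1 ∈ A ∧ p.2 ∈ Y ∧ 0 < eta g p.1 p.2}
  have hdenom : ∀ p ∈ S, 0 < ⟪p.1, p.2⟫ - (fconj g p.2).toReal := fun p hp => by
    have := hp.2.2
    rw [eta_eq_coe (hY _ hp.2.1)] at this
    exact EReal.coe_pos.mp this
  have hnum : ContinuousOn (fun p : E × E => (f p.1).toReal + h p.1) S := by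
    intro p hp
    have hfp : f p.1 ≠ ⊤ := hA hp.1
    refine ContinuousWithinAt.add ?_ ((hh _ hp.1).comp continuous_fst.continuousAt).continuousWithinAt
    exact (EReal.tendsto_toReal hfp (hf_bot _)).comp
      ((hf _ hfp).comp continuous_fst.continuousWithinAt fun q hq => hA hq.1)
  have hden : ContinuousOn (fun p : E × E => ⟪p.1, p.2⟫ - (fconj g p.2).toReal) S :=
    (continuous_fst.inner continuous_snd).continuousOn.sub
      (hconj.comp continuous_snd.continuousOn fun _ hp => hp.2.1)
  refine (continuous_coe_real_ereal.comp_continuousOn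
    (hnum.div hden fun p hp => (hdenom p hp).ne')).congr fun p hp => ?_
  rw [Qfun, if_pos ⟨hA hp.1, hp.2.2⟩, eta_eq_coe (hY _ hp.2.1), EReal.toReal_coe]
  rfl

theorem statement15_general {n : ℕ} (f : EuclideanSpace ℝ (Fin n) → EReal)
    (g h : EuclideanSpace ℝ (Fin n) → ℝ) (hb : Blanket f g h)
    (x0 : EuclideanSpace ℝ (Fin n)) (hx0 : Ffun f g h x0 ≠ ⊤)
    (hne : (lvlSet f g h x0).Nonempty) (hcomp : IsCompact (lvlSet f g h x0))
    (αl : ℝ) :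
    (∀ y ∈ Yset f g h x0 αl, fconj g y ≠ ⊤) ∧
    (∃ K : ℝ, 0 ≤ K ∧ ∀ x₁ ∈ lvlSet f g h x0, ∀ x₂ ∈ lvlSet f g h x0,
        ∀ y₁ ∈ Yset f g h x0 αl, ∀ y₂ ∈ Yset f g h x0 αl,
          |(eta g x₁ y₁).toReal - (eta g x₂ y₂).toReal| ≤ K * ‖mk2 x₁ y₁ - mk2 x₂ y₂‖) ∧
    (∀ y₁ ∈ Yset f g h x0 αl, ∀ y₂ ∈ Yset f g h x0 αl,
        |(fconj g y₁).toReal - (fconj g y₂).toReal| ≤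
          (sSup ((fun x : EuclideanSpace ℝ (Fin n) => ‖x‖) '' lvlSet f g h x0) +
            Real.sqrt (sSup (g '' lvlSet f g h x0) / αl)) * ‖y₁ - y₂‖) ∧
    ContinuousOn (Qpair f g h)
      ((fun p : EuclideanSpace ℝ (Fin n) × EuclideanSpace ℝ (Fin n) => mk2 p.1 p.2) ''
        Sset f g h x0 αl) := by
  set X := lvlSet f g h x0
  set Y := Yset f g h x0 αl
  set L := sSup ((fun x : EuclideanSpace ℝ (Fin n) => ‖x‖) '' X) + Real.sqrt (sSup (g '' X) / αl)
  have hg : Continuous g := continuousOn_univ.mp (hb.g_convex.continuousOn isOpen_univ)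
  have hL : 0 ≤ L := add_nonneg (Real.sSup_nonneg (by simp)) (Real.sqrt_nonneg _)
  have hY : ∀ y ∈ Y, ∃ z, ‖z‖ ≤ L ∧ y ∈ cvxSubdiff g z := fun y hy => by
    obtain ⟨z, hz, hyz⟩ := mem_iUnion₂.mp hy
    exact ⟨z, mem_closedBall_zero_iff.mp (Xal_subset_closedBall hne hcomp αl hz), hyz⟩
  have hconj : ∀ y₁ ∈ Y, ∀ y₂ ∈ Y,
      |(fconj g y₁).toReal - (fconj g y₂).toReal| ≤ L * ‖y₁ - y₂‖ := fun y₁ hy₁ y₂ hy₂ => by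
    obtain ⟨z₁, hz₁, h₁⟩ := hY y₁ hy₁
    obtain ⟨z₂, hz₂, h₂⟩ := hY y₂ hy₂
    exact abs_fconj_toReal_sub_le h₁ h₂ hz₁ hz₂
  have hfinite : ∀ y ∈ Y, fconj g y ≠ ⊤ := fun y hy => by
    obtain ⟨z, -, hyz⟩ := hY y hy
    exact fconj_eq_of_mem_cvxSubdiff hyz ▸ EReal.coe_ne_top _
  obtain ⟨M, hM, hXM⟩ := hcomp.isBounded.exists_pos_norm_le
  obtain ⟨N, hN, hYN⟩ := (isBounded_biUnion_cvxSubdiff hg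
    ((Metric.isBounded_closedBall).subset (Xal_subset_closedBall hne hcomp αl))).exists_pos_norm_le
  refine ⟨hfinite, ⟨M + N + L, by positivity, fun x₁ hx₁ x₂ _ y₁ hy₁ y₂ hy₂ => ?_⟩, hconj, ?_⟩
  · obtain ⟨z₁, hz₁, h₁⟩ := hY y₁ hy₁
    obtain ⟨z₂, hz₂, h₂⟩ := hY y₂ hy₂
    exact abs_eta_toReal_sub_le h₁ h₂ hz₁ hz₂ (hXM x₁ hx₁) (hYN y₂ hy₂)
  · have hXdom := fun x (hx : x ∈ X) => ne_zero_and_ne_top_of_mem_lvlSet hx0 hx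
    have hQ := continuousOn_Qfun hb.f_cont hb.f_proper.2 (fun x hx => (hXdom x hx).2)
      (fun x hx => (hb.h_diff.1 x (hXdom x hx).1).continuousAt) hfinite
      (LipschitzOnWith.of_dist_le_mul (K := L.toNNReal) fun y₁ hy₁ y₂ hy₂ => by
        rw [Real.dist_eq, dist_eq_norm, Real.coe_toNNReal L hL]
        exact hconj y₁ hy₁ y₂ hy₂).continuousOn
    exact hQ.comp (WithLp.prod_continuous_ofLp 2 _ _).continuousOn fun _ ⟨p, hp, hq⟩ => hq ▸ hp

/-- `η` is Lipschitz on `X × 𝒴`, `g^*` is Lipschitz on `𝒴`,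
and `Q` is continuous on `S`. -/
theorem statement15 {n : ℕ} (f : EuclideanSpace ℝ (Fin n) → EReal)
    (g h : EuclideanSpace ℝ (Fin n) → ℝ) (hb : Blanket f g h)
    (x0 : EuclideanSpace ℝ (Fin n)) (hx0 : Ffun f g h x0 ≠ ⊤)
    (hne : (lvlSet f g h x0).Nonempty) (hcomp : IsCompact (lvlSet f g h x0))
    (αl : ℝ) (hαl : 0 < αl) :
    (∀ y ∈ Yset f g h x0 αl, fconj g y ≠ ⊤) ∧
    (∃ K : ℝ, 0 ≤ K ∧ ∀ x₁ ∈ lvlSet f g h x0, ∀ x₂ ∈ lvlSet f g h x0,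
        ∀ y₁ ∈ Yset f g h x0 αl, ∀ y₂ ∈ Yset f g h x0 αl,
          |(eta g x₁ y₁).toReal - (eta g x₂ y₂).toReal| ≤ K * ‖mk2 x₁ y₁ - mk2 x₂ y₂‖) ∧
    (∀ y₁ ∈ Yset f g h x0 αl, ∀ y₂ ∈ Yset f g h x0 αl,
        |(fconj g y₁).toReal - (fconj g y₂).toReal| ≤
          (sSup ((fun x : EuclideanSpace ℝ (Fin n) => ‖x‖) '' lvlSet f g h x0) +
            Real.sqrt (sSup (g '' lvlSet f g h x0) / αl)) * ‖y₁ - y₂‖) ∧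
    ContinuousOn (Qpair f g h)
      ((fun p : EuclideanSpace ℝ (Fin n) × EuclideanSpace ℝ (Fin n) => mk2 p.1 p.2) ''
        Sset f g h x0 αl) :=
  statement15_general f g h hb x0 hx0 hne hcomp αl

end Paper
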